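/- arXiv:2305.07566 — 2 statements merged into one kernel-verified Lean document; each statement's English description precedes it below -/
import Mathlib

section
/- Fix λ ∈ ℝ and R > 0 (with R < π/(2√λ) if λ > 0). Suppose (B_n) is a sequence of angles with B_n → π as n → ∞ and 0 < B_n < π, and define ℓ_n by ta_λ(ℓ_n/2) = ta_λ(R)·cos(B_n/2). Then the sequence κ_n = (π - B_n)/(2·ta_λ(ℓ_n/2)) converges to co_λ(R) = c_λ(R)/s_λ(R). -/
open Real

/-- Generalized sine `s_λ` for curvature `L`. -/
noncomputable def slam (L t : ℝ) : ℝ :=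
  if 0 < L then Real.sin (Real.sqrt L * t) / Real.sqrt L
  else if L < 0 then Real.sinh (Real.sqrt (-L) * t) / Real.sqrt (-L)
  else t

/-- Generalized cosine `c_λ` for curvature `L`. -/
noncomputable def clam (L t : ℝ) : ℝ :=
  if 0 < L then Real.cos (Real.sqrt L * t)
  else if L < 0 then Real.cosh (Real.sqrt (-L) * t)
  else 1

/-- Generalized tangent `ta_λ`. -/
noncomputable def talam (L t : ℝ) : ℝ := slam L t / clam L t

/-- Generalized cotangent `co_λ`. -/
noncomputable def colam (L t : ℝ) : ℝ := clam L t / slam L t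

/-!
Writing `x = (π - B)/2`, we have `cos (B/2) = sin x`, so the defining relation of `ℓ` turns the
discrete curvature into `x / (ta_λ(R) sin x) = co_λ(R) / sinc x`. As `B → π` from below, `x → 0`
with `x ≠ 0`, and `sinc x → 1`.
-/

open Filter Topology

theorem colam_eq_inv_talam (L t : ℝ) : colam L t = (talam L t)⁻¹ :=
  (inv_div _ _).symm

theorem pi_sub_div_two_mul_mul_cos_half (T b : ℝ) (hb : b ≠ π) :
    (π - b) / (2 * (T * cos (b / 2))) = (sinc ((π - b) / 2))⁻¹ * T⁻¹ := by
  have hcos : cos (b / 2) = sin ((π - b) / 2) := by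
    rw [← cos_pi_div_two_sub]
    ring_nf
  have hx : (π - b) / 2 ≠ 0 := by
    intro h
    exact hb (by linarith [div_eq_zero_iff.mp h])
  rw [hcos, sinc_of_ne_zero hx, inv_div]
  simp only [div_eq_mul_inv, mul_inv]
  ring

theorem tendsto_inv_sinc_of_tendsto_zero {α : Type*} {l : Filter α} {x : α → ℝ}
    (hx : Tendsto x l (𝓝 0)) :
    Tendsto (fun a => (sinc (x a))⁻¹) l (𝓝 1) := by
  simpa using ((continuous_sinc.tendsto 0).comp hx).inv₀ (by simp)

open Filter in
theorem stmt_5_general (L R : ℝ)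
    (B : ℕ → ℝ) (hB : ∀ n, 0 < B n ∧ B n < π)
    (hBlim : Tendsto B atTop (nhds π))
    (l : ℕ → ℝ) (hl : ∀ n, talam L (l n / 2) = talam L R * Real.cos (B n / 2)) :
    Tendsto (fun n => (π - B n) / (2 * talam L (l n / 2))) atTop (nhds (colam L R)) := by
  have hx : Tendsto (fun n => (π - B n) / 2) atTop (𝓝 0) := by
    simpa using ((tendsto_const_nhds (x := π)).sub hBlim).div_const (2 : ℝ)
  have hκ : ∀ n, (π - B n) / (2 * talam L (l n / 2))
      = (sinc ((π - B n) / 2))⁻¹ * colam L R := fun n => by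
    rw [hl n, colam_eq_inv_talam, pi_sub_div_two_mul_mul_cos_half _ _ (hB n).2.ne]
  simp only [hκ]
  simpa using (tendsto_inv_sinc_of_tendsto_zero hx).mul_const (colam L R)

open Filter in
/-- The discrete curvatures of inscribed regular polygons converge to the
curvature `co_λ(R)` of the circumscribing circle. -/
theorem stmt_5 (L R : ℝ) (hR : 0 < R) (hRL : 0 < L → R < π / (2 * Real.sqrt L))
    (B : ℕ → ℝ) (hB : ∀ n, 0 < B n ∧ B n < π)
    (hBlim : Tendsto B atTop (nhds π))
    (l : ℕ → ℝ) (hl : ∀ n, talam L (l n / 2) = talam L R * Real.cos (B n / 2)) :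
    Tendsto (fun n => (π - B n) / (2 * talam L (l n / 2))) atTop (nhds (colam L R)) :=
  stmt_5_general L R B hB hBlim l hl
end

section
/- Fix θ ∈ (0, π/2] and φ ∈ (−θ, θ). For ε > 0 define r_ε(φ) = r₀(ε) + a(ε)φ² + b(ε)φ⁴ where b(ε)/ε → −1/(8θ²), a(ε) = −2b(ε)θ², r₀(ε) = ε + b(ε)θ⁴ as ε → 0⁺. Then r_ε(φ)/ε → 1 − (θ² − φ²)²/(8θ²), r_ε'(φ)/ε → φ/2 − φ³/(2θ²), r_ε''(φ)/ε → 1/2 − 3φ²/(2θ²), and the limit function 1 − (θ² − φ²)²/(8θ²) is strictly positive for |φ| < θ. Consequently the curvature expression k_ε(φ) = s_λ(r_ε)·(r_ε'' + s_λ(r_ε)c_λ(r_ε) + 3 r_ε'² co_λ(r_ε))/(s_λ(r_ε)² + r_ε'²)^{3/2} tends to +∞ as ε → 0⁺. -/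
/-!
Writing `ρ, e, d` for the limits of `r_ε/ε, r_ε'/ε, r_ε''/ε`, the expression `k_ε` is homogeneous of
degree `-1` in `(s_λ(r_ε), r_ε', r_ε'')` once `c_λ(r_ε)` is held fixed, and `s_λ(t) ~ t`,
`c_λ(t) → 1` as `t → 0`. Hence `ε k_ε → ρ (d + ρ + 3 e²/ρ) / (ρ² + e²)^{3/2}`, which is positive:
with `t = θ² < 8` and `s = θ² - φ² ∈ (0, t]`, its numerator is
`(96 t s + 40 t s² - 60 s³ + s⁴) / (64 t²) ≥ s² (8 - s) (12 - s) / (64 t²)`.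
-/

open Real

open Filter Topology

lemma hasDerivAt_slam_zero (L : ℝ) : HasDerivAt (slam L) 1 0 := by
  rcases lt_trichotomy 0 L with hL | rfl | hL
  · have hs : √L ≠ 0 := by positivity
    have h := (((hasDerivAt_id (0 : ℝ)).const_mul √L).sin).div_const √L
    simp only [mul_zero, cos_zero, id, mul_one, one_mul, div_self hs] at h
    exact h.congr_of_eventuallyEq (.of_eq (funext fun t => if_pos hL))
  · exact (hasDerivAt_id 0).congr_of_eventuallyEq (.of_eq (funext fun t => by simp [slam]))
  · have hs : √(-L) ≠ 0 := (sqrt_pos.mpr (neg_pos.mpr hL)).ne'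
    have h := (((hasDerivAt_id (0 : ℝ)).const_mul √(-L)).sinh).div_const √(-L)
    simp only [mul_zero, cosh_zero, id, mul_one, one_mul, div_self hs] at h
    exact h.congr_of_eventuallyEq (.of_eq (funext fun t => by simp [slam, hL, hL.not_gt]))

lemma slam_zero (L : ℝ) : slam L 0 = 0 := by
  unfold slam; split_ifs <;> simp

lemma tendsto_slam_div_self (L : ℝ) : Tendsto (fun t => slam L t / t) (𝓝[≠] 0) (𝓝 1) := by
  refine (hasDerivAt_iff_tendsto_slope.mp (hasDerivAt_slam_zero L)).congr fun t => ?_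
  rw [slope_def_field, slam_zero, sub_zero, sub_zero]

lemma continuous_clam (L : ℝ) : Continuous (clam L) := by
  unfold clam; split_ifs <;> fun_prop

lemma clam_zero (L : ℝ) : clam L 0 = 1 := by
  unfold clam; split_ifs <;> simp

lemma tendsto_nhdsGT_of_tendsto_div {r : ℝ → ℝ} {ρ : ℝ} (hρ : 0 < ρ)
    (hr : Tendsto (fun ε => r ε / ε) (𝓝[>] 0) (𝓝 ρ)) : Tendsto r (𝓝[>] 0) (𝓝[>] 0) := by
  have hε : ∀ᶠ ε in 𝓝[>] (0 : ℝ), 0 < ε := self_mem_nhdsWithin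
  refine tendsto_nhdsWithin_iff.mpr ⟨?_, ?_⟩
  · have h := hr.mul (tendsto_id.mono_left (nhdsWithin_le_nhds (a := (0 : ℝ))))
    rw [mul_zero] at h
    refine h.congr' ?_
    filter_upwards [hε] with ε hε using div_mul_cancel₀ _ hε.ne'
  · filter_upwards [hr.eventually (eventually_gt_nhds hρ), hε] with ε h hε
    exact (div_pos_iff_of_pos_right hε).mp h

lemma tendsto_slam_comp_div {L ρ : ℝ} {r : ℝ → ℝ} (hρ : 0 < ρ)
    (hr : Tendsto (fun ε => r ε / ε) (𝓝[>] 0) (𝓝 ρ)) :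
    Tendsto (fun ε => slam L (r ε) / ε) (𝓝[>] 0) (𝓝 ρ) := by
  have hr' := tendsto_nhdsGT_of_tendsto_div hρ hr
  have h := ((tendsto_slam_div_self L).comp (hr'.mono_right (nhdsGT_le_nhdsNE 0))).mul hr
  rw [one_mul] at h
  refine h.congr' ?_
  filter_upwards [hr'.eventually self_mem_nhdsWithin] with ε hε
  simp only [Function.comp_apply]
  rw [div_mul_div_cancel₀ (ne_of_gt hε)]

/-- The curvature `k` of the statement, with `S = s_λ(r)`, `C = c_λ(r)`, `P = r'`, `Q = r''`. -/
noncomputable def polarCurvature (S C P Q : ℝ) : ℝ :=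
  S * (Q + S * C + 3 * P ^ 2 * (C / S)) / (S ^ 2 + P ^ 2) ^ ((3 : ℝ) / 2)

lemma polarCurvature_eq_inv_mul {ε : ℝ} (hε : 0 < ε) (S C P Q : ℝ) :
    polarCurvature S C P Q = ε⁻¹ * polarCurvature (S / ε) C (P / ε) (Q / ε) := by
  have hpow : ((S / ε) ^ 2 + (P / ε) ^ 2) ^ ((3 : ℝ) / 2) =
      (S ^ 2 + P ^ 2) ^ ((3 : ℝ) / 2) / ε ^ 3 := by
    rw [div_pow, div_pow, ← add_div, div_rpow (by positivity) (by positivity), ← rpow_natCast ε 2,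
      ← rpow_mul hε.le]
    norm_num
  rcases eq_or_ne S 0 with rfl | hS
  · simp [polarCurvature]
  rw [polarCurvature, polarCurvature, hpow]
  field_simp

lemma polarCurvature_one_pos {ρ e d : ℝ} (hρ : 0 < ρ) (hN : 0 < ρ * d + ρ ^ 2 + 3 * e ^ 2) :
    0 < polarCurvature ρ 1 e d := by
  have : ρ * (d + ρ * 1 + 3 * e ^ 2 * (1 / ρ)) = ρ * d + ρ ^ 2 + 3 * e ^ 2 := by
    field_simp
  rw [polarCurvature, this]
  positivity

lemma Filter.Tendsto.polarCurvature {α : Type*} {l : Filter α} {S C P Q : α → ℝ} {s c p q : ℝ}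
    (hS : Tendsto S l (𝓝 s)) (hC : Tendsto C l (𝓝 c)) (hP : Tendsto P l (𝓝 p))
    (hQ : Tendsto Q l (𝓝 q)) (hs : s ≠ 0) :
    Tendsto (fun x => polarCurvature (S x) (C x) (P x) (Q x)) l (𝓝 (polarCurvature s c p q)) := by
  have hden : 0 < s ^ 2 + p ^ 2 := by positivity
  exact (hS.mul ((hQ.add (hS.mul hC)).add ((tendsto_const_nhds.mul (hP.pow 2)).mul
    (hC.div hS hs)))).div (((hS.pow 2).add (hP.pow 2)).rpow_const (.inl hden.ne')) (by positivity)

theorem tendsto_curvature_atTop (L : ℝ) {r rp rpp : ℝ → ℝ} {ρ e d : ℝ} (hρ : 0 < ρ)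
    (hr : Tendsto (fun ε => r ε / ε) (𝓝[>] 0) (𝓝 ρ))
    (hrp : Tendsto (fun ε => rp ε / ε) (𝓝[>] 0) (𝓝 e))
    (hrpp : Tendsto (fun ε => rpp ε / ε) (𝓝[>] 0) (𝓝 d))
    (hN : 0 < ρ * d + ρ ^ 2 + 3 * e ^ 2) :
    Tendsto (fun ε => slam L (r ε) * (rpp ε + slam L (r ε) * clam L (r ε)
        + 3 * rp ε ^ 2 * colam L (r ε)) / (slam L (r ε) ^ 2 + rp ε ^ 2) ^ ((3 : ℝ) / 2))
      (𝓝[>] 0) atTop := by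
  have hC : Tendsto (fun ε => clam L (r ε)) (𝓝[>] 0) (𝓝 1) :=
    ((continuous_clam L).tendsto' 0 1 (clam_zero L)).comp
      ((tendsto_nhdsGT_of_tendsto_div hρ hr).mono_right nhdsWithin_le_nhds)
  have hrescaled := (tendsto_slam_comp_div (L := L) hρ hr).polarCurvature hC hrp hrpp hρ.ne'
  refine (tendsto_inv_nhdsGT_zero.atTop_mul_pos (polarCurvature_one_pos hρ hN) hrescaled).congr' ?_
  filter_upwards [self_mem_nhdsWithin] with ε (hε : 0 < ε)
  exact (polarCurvature_eq_inv_mul hε _ _ _ _).symm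

lemma tendsto_div_of_eq_linear {f b : ℝ → ℝ} {β x y l : ℝ}
    (hb : Tendsto (fun ε => b ε / ε) (𝓝[>] 0) (𝓝 β)) (hf : ∀ ε, f ε = x * ε + y * b ε)
    (hl : x + y * β = l) : Tendsto (fun ε => f ε / ε) (𝓝[>] 0) (𝓝 l) := by
  refine hl ▸ (tendsto_const_nhds.add (hb.const_mul y)).congr' ?_
  filter_upwards [self_mem_nhdsWithin] with ε (hε : 0 < ε)
  rw [hf]
  field_simp

lemma quartic_limit_pos {θ φ : ℝ} (hθ8 : θ ^ 2 < 8) (hφθ : φ ^ 2 < θ ^ 2) :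
    0 < 1 - (θ ^ 2 - φ ^ 2) ^ 2 / (8 * θ ^ 2) := by
  have hθ : 0 < θ ^ 2 := by nlinarith
  rw [sub_pos, div_lt_one (by positivity)]
  nlinarith

lemma quartic_poly_pos {s t : ℝ} (hs : 0 < s) (hst : s ≤ t) (ht : t < 8) :
    0 < 96 * t * s + 40 * t * s ^ 2 - 60 * s ^ 3 + s ^ 4 := by
  have h₁ : 40 * s ^ 3 ≤ 40 * t * s ^ 2 := by nlinarith [sq_nonneg s]
  have h₂ : 96 * s ^ 2 ≤ 96 * t * s := by nlinarith
  have h₃ : 0 < s ^ 2 * ((8 - s) * (12 - s)) := by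
    have : 0 < (8 - s) * (12 - s) := mul_pos (by linarith) (by linarith)
    positivity
  nlinarith

lemma quartic_curvature_limit_pos {θ φ : ℝ} (hθ8 : θ ^ 2 < 8) (hφθ : φ ^ 2 < θ ^ 2) :
    let ρ := 1 - (θ ^ 2 - φ ^ 2) ^ 2 / (8 * θ ^ 2)
    let e := φ / 2 - φ ^ 3 / (2 * θ ^ 2)
    let d := 1 / 2 - 3 * φ ^ 2 / (2 * θ ^ 2)
    0 < ρ * d + ρ ^ 2 + 3 * e ^ 2 := by
  intro ρ e d
  have hθ : θ ≠ 0 := by rintro rfl; nlinarith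
  have hpoly := quartic_poly_pos (s := θ ^ 2 - φ ^ 2) (t := θ ^ 2) (by linarith) (by nlinarith) hθ8
  have hident : ρ * d + ρ ^ 2 + 3 * e ^ 2 = (96 * θ ^ 2 * (θ ^ 2 - φ ^ 2)
      + 40 * θ ^ 2 * (θ ^ 2 - φ ^ 2) ^ 2 - 60 * (θ ^ 2 - φ ^ 2) ^ 3 + (θ ^ 2 - φ ^ 2) ^ 4)
      / (64 * θ ^ 4) := by
    simp only [ρ, e, d]
    field_simp
    ring
  rw [hident]
  exact div_pos hpoly (by positivity)

open Filter in
/-- Appendix asymptotics: for the quartic rounding functions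
`r_ε(φ) = r₀(ε) + a(ε)φ² + b(ε)φ⁴` with `b(ε)/ε → -1/(8θ²)`, `a(ε) = -2b(ε)θ²`,
`r₀(ε) = ε + b(ε)θ⁴`, one has `r_ε/ε`, `r_ε'/ε`, `r_ε''/ε` converging to the
stated limits, the limit of `r_ε/ε` is positive for `|φ| < θ`, and the curvature
expression `k_ε(φ)` tends to `+∞` as `ε → 0⁺`. -/
theorem stmt_19 (L θ φ : ℝ) (hθ : 0 < θ) (hθ' : θ ≤ π / 2)
    (hφ : -θ < φ) (hφ' : φ < θ)
    (b a r₀ : ℝ → ℝ)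
    (hb : Tendsto (fun ε => b ε / ε) (nhdsWithin 0 (Set.Ioi 0))
      (nhds (-1 / (8 * θ ^ 2))))
    (ha : ∀ ε, a ε = -2 * b ε * θ ^ 2)
    (hr₀ : ∀ ε, r₀ ε = ε + b ε * θ ^ 4) :
    letI r : ℝ → ℝ := fun ε => r₀ ε + a ε * φ ^ 2 + b ε * φ ^ 4
    letI rp : ℝ → ℝ := fun ε => 2 * a ε * φ + 4 * b ε * φ ^ 3
    letI rpp : ℝ → ℝ := fun ε => 2 * a ε + 12 * b ε * φ ^ 2
    letI k : ℝ → ℝ := fun ε =>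
      slam L (r ε) * (rpp ε + slam L (r ε) * clam L (r ε) + 3 * rp ε ^ 2 * colam L (r ε))
        / ((slam L (r ε)) ^ 2 + rp ε ^ 2) ^ ((3 : ℝ) / 2)
    Tendsto (fun ε => r ε / ε) (nhdsWithin 0 (Set.Ioi 0))
        (nhds (1 - (θ ^ 2 - φ ^ 2) ^ 2 / (8 * θ ^ 2))) ∧
      Tendsto (fun ε => rp ε / ε) (nhdsWithin 0 (Set.Ioi 0))
        (nhds (φ / 2 - φ ^ 3 / (2 * θ ^ 2))) ∧
      Tendsto (fun ε => rpp ε / ε) (nhdsWithin 0 (Set.Ioi 0))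
        (nhds (1 / 2 - 3 * φ ^ 2 / (2 * θ ^ 2))) ∧
      0 < 1 - (θ ^ 2 - φ ^ 2) ^ 2 / (8 * θ ^ 2) ∧
      Tendsto k (nhdsWithin 0 (Set.Ioi 0)) atTop := by
  have hθ8 : θ ^ 2 < 8 := by nlinarith [pi_lt_d2]
  have hφθ : φ ^ 2 < θ ^ 2 := by nlinarith
  have hθ0 : θ ≠ 0 := hθ.ne'
  have hr : Tendsto (fun ε => (r₀ ε + a ε * φ ^ 2 + b ε * φ ^ 4) / ε)
      (𝓝[>] 0) (𝓝 (1 - (θ ^ 2 - φ ^ 2) ^ 2 / (8 * θ ^ 2))) :=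
    tendsto_div_of_eq_linear (x := 1) (y := (θ ^ 2 - φ ^ 2) ^ 2) hb
      (fun ε => by rw [ha, hr₀]; ring) (by field_simp; ring)
  have hrp : Tendsto (fun ε => (2 * a ε * φ + 4 * b ε * φ ^ 3) / ε)
      (𝓝[>] 0) (𝓝 (φ / 2 - φ ^ 3 / (2 * θ ^ 2))) :=
    tendsto_div_of_eq_linear (x := 0) (y := 4 * φ ^ 3 - 4 * θ ^ 2 * φ) hb
      (fun ε => by rw [ha]; ring) (by field_simp; ring)
  have hrpp : Tendsto (fun ε => (2 * a ε + 12 * b ε * φ ^ 2) / ε)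
      (𝓝[>] 0) (𝓝 (1 / 2 - 3 * φ ^ 2 / (2 * θ ^ 2))) :=
    tendsto_div_of_eq_linear (x := 0) (y := 12 * φ ^ 2 - 4 * θ ^ 2) hb
      (fun ε => by rw [ha]; ring) (by field_simp; ring)
  have hρ := quartic_limit_pos hθ8 hφθ
  exact ⟨hr, hrp, hrpp, hρ,
    tendsto_curvature_atTop L hρ hr hrp hrpp (quartic_curvature_limit_pos hθ8 hφθ)⟩
end
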